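/- arXiv:1902.10305 — 4 statements merged into one kernel-verified Lean document; each statement's English description precedes it below -/
import Mathlib

section
/- Suppose g : ℝ × ℝ → ℝ is differentiable and its partial derivatives with respect to the first and second variables agree everywhere: ∂g/∂l₁ = ∂g/∂l₂. Then g(l₁,l₂) = g(l₁+l₂, 0) for all l₁, l₂. -/
theorem apply_add_smul_eq_of_fderiv_apply_eq_zero {E F : Type*}
    [NormedAddCommGroup E] [NormedSpace ℝ E] [NormedAddCommGroup F] [NormedSpace ℝ F]
    {f : E → F} (hf : Differentiable ℝ f) {v : E} (hv : ∀ x, fderiv ℝ f x v = 0)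
    (x : E) (t : ℝ) : f (x + t • v) = f x := by
  have hline : ∀ s : ℝ, HasDerivAt (fun s : ℝ => f (x + s • v)) 0 s := fun s => by
    have hpath : HasDerivAt (fun s : ℝ => x + s • v) v s :=
      ((hasDerivAt_id s).smul_const v).const_add x |>.congr_deriv (one_smul ℝ v)
    simpa only [hv, Function.comp_def] using (hf (x + s • v)).hasFDerivAt.comp_hasDerivAt s hpath
  simpa using is_const_of_deriv_eq_zero (fun s => (hline s).differentiableAt)
    (fun s => (hline s).deriv) t 0

theorem eq_partial_deriv_imp_addition (g : ℝ × ℝ → ℝ)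
    (hg : Differentiable ℝ g)
    (heq : ∀ p : ℝ × ℝ, fderiv ℝ g p (1, 0) = fderiv ℝ g p (0, 1)) :
    ∀ l₁ l₂ : ℝ, g (l₁, l₂) = g (l₁ + l₂, 0) := by
  intro l₁ l₂
  have hdiag : ∀ p, fderiv ℝ g p (1, -1) = 0 := fun p => by
    rw [show ((1, -1) : ℝ × ℝ) = (1, 0) - (0, 1) by simp, map_sub, heq, sub_self]
  simpa using (apply_add_smul_eq_of_fderiv_apply_eq_zero hg hdiag (l₁, l₂) l₂).symm
end

section
/- If r : ℝ → ℝ is twice differentiable and satisfies r'' = 2·r³ with r(0)=0 and r'(0)=1 on an open interval I containing 0, then the function w(l) = 2 r(l)²/(1+r(l)⁴) satisfies w(l) = (sleaf₂(√2·l))², i.e., if u solves u'' = -2u³, u(0)=0, u'(0)=1, then u(√2·l)² · (1 + r(l)⁴) = 2·r(l)² wherever both are defined. -/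
open Set Real
open scoped NNReal

/-- A function with zero derivative on an open convex set is constant there. -/
lemma aux_const_of_deriv_zero {s : Set ℝ} (hs : Convex ℝ s) (ho : IsOpen s) {f : ℝ → ℝ}
    (hf : ∀ x ∈ s, HasDerivAt f 0 x) {x y : ℝ} (hx : x ∈ s) (hy : y ∈ s) : f x = f y := by
  apply hs.is_const_of_fderivWithin_eq_zero
    (fun z hz => ((hf z hz).differentiableAt).differentiableWithinAt) ?_ hx hy
  intro z hz
  rw [fderivWithin_of_isOpen ho hz, ((hf z hz).hasFDerivAt).fderiv]
  ext w; simp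

lemma aux_lip : LipschitzOnWith 24 (fun p : ℝ × ℝ => (p.2, 4 - 12 * p.1 ^ 2))
    {p : ℝ × ℝ | |p.1| ≤ 1} := by
  rw [lipschitzOnWith_iff_dist_le_mul]
  intro p hp q hq
  simp only [Set.mem_setOf_eq] at hp hq
  rw [Prod.dist_eq, Prod.dist_eq]
  simp only [Real.dist_eq]
  have hK : ((24 : ℝ≥0) : ℝ) = 24 := by norm_num
  rw [hK]
  have h1 : |p.1 - q.1| ≤ max |p.1 - q.1| |p.2 - q.2| := le_max_left _ _
  have h2 : |p.2 - q.2| ≤ max |p.1 - q.1| |p.2 - q.2| := le_max_right _ _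
  have h0 : (0:ℝ) ≤ max |p.1 - q.1| |p.2 - q.2| := le_trans (abs_nonneg _) h1
  apply max_le
  · nlinarith
  · rw [show (4:ℝ) - 12 * p.1 ^ 2 - (4 - 12 * q.1 ^ 2) = 12 * ((p.1 + q.1) * (q.1 - p.1)) by ring,
      abs_mul, abs_mul, abs_of_nonneg (by norm_num : (0:ℝ) ≤ 12), abs_sub_comm q.1 p.1]
    have hpq : |p.1 + q.1| ≤ 2 := by
      calc |p.1 + q.1| ≤ |p.1| + |q.1| := abs_add_le _ _
        _ ≤ 2 := by linarith
    nlinarith [abs_nonneg (p.1 - q.1), abs_nonneg (p.1 + q.1)]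

theorem sleaf_sleafh_relation (a b c d : ℝ) (ha : a < 0) (hb : 0 < b) (hc : c < 0) (hd : 0 < d)
    (r r' u u' : ℝ → ℝ)
    (hr : ∀ l ∈ Set.Ioo a b, HasDerivAt r (r' l) l)
    (hr2 : ∀ l ∈ Set.Ioo a b, HasDerivAt r' (2 * r l ^ 3) l)
    (hr0 : r 0 = 0) (hr1 : r' 0 = 1)
    (hu : ∀ l ∈ Set.Ioo c d, HasDerivAt u (u' l) l)
    (hu2 : ∀ l ∈ Set.Ioo c d, HasDerivAt u' (-2 * u l ^ 3) l)
    (hu0 : u 0 = 0) (hu1 : u' 0 = 1) :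
    ∀ l ∈ Set.Ioo a b, Real.sqrt 2 * l ∈ Set.Ioo c d →
      (u (Real.sqrt 2 * l)) ^ 2 = 2 * r l ^ 2 / (1 + r l ^ 4) := by
  intro l₀ hl₀ hl₀'
  have hs2 : Real.sqrt 2 ^ 2 = 2 := Real.sq_sqrt (by norm_num)
  have hs2pos : (0:ℝ) < Real.sqrt 2 := Real.sqrt_pos.mpr (by norm_num)
  -- conserved quantities
  have hucons : ∀ t ∈ Set.Ioo c d, u' t ^ 2 = 1 - u t ^ 4 := by
    intro t ht
    have h0 : (0:ℝ) ∈ Set.Ioo c d := ⟨hc, hd⟩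
    have key : u' t ^ 2 + u t ^ 4 = u' 0 ^ 2 + u 0 ^ 4 := by
      apply aux_const_of_deriv_zero (convex_Ioo c d) isOpen_Ioo
        (f := fun t => u' t ^ 2 + u t ^ 4) ?_ ht h0
      intro x hx
      have hder := ((hu2 x hx).pow 2).add ((hu x hx).pow 4)
      refine hder.congr_deriv (Eq.symm ?_)
      ring
    rw [hu0, hu1] at key
    nlinarith [key]
  have hrcons : ∀ t ∈ Set.Ioo a b, r' t ^ 2 = 1 + r t ^ 4 := by
    intro t ht
    have h0 : (0:ℝ) ∈ Set.Ioo a b := ⟨ha, hb⟩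
    have key : r' t ^ 2 - r t ^ 4 = r' 0 ^ 2 - r 0 ^ 4 := by
      apply aux_const_of_deriv_zero (convex_Ioo a b) isOpen_Ioo
        (f := fun t => r' t ^ 2 - r t ^ 4) ?_ ht h0
      intro x hx
      have hder := ((hr2 x hx).pow 2).sub ((hr x hx).pow 4)
      refine hder.congr_deriv (Eq.symm ?_)
      ring
    rw [hr0, hr1] at key
    nlinarith [key]
  -- restricted interval
  set a' : ℝ := max a (c / Real.sqrt 2) with ha'def
  set b' : ℝ := min b (d / Real.sqrt 2) with hb'def
  have ha' : a' < 0 := max_lt ha (div_neg_of_neg_of_pos hc hs2pos)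
  have hb' : 0 < b' := lt_min hb (div_pos hd hs2pos)
  have hsub : ∀ t ∈ Set.Ioo a' b', t ∈ Set.Ioo a b ∧ Real.sqrt 2 * t ∈ Set.Ioo c d := by
    intro t ht
    obtain ⟨ht1, ht2⟩ := ht
    rw [ha'def] at ht1; rw [hb'def] at ht2
    refine ⟨⟨lt_of_le_of_lt (le_max_left _ _) ht1, lt_of_lt_of_le ht2 (min_le_left _ _)⟩, ?_, ?_⟩
    · have : c / Real.sqrt 2 < t := lt_of_le_of_lt (le_max_right _ _) ht1
      calc c = Real.sqrt 2 * (c / Real.sqrt 2) := by field_simp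
        _ < Real.sqrt 2 * t := by exact mul_lt_mul_of_pos_left this hs2pos
    · have : t < d / Real.sqrt 2 := lt_of_lt_of_le ht2 (min_le_right _ _)
      calc Real.sqrt 2 * t < Real.sqrt 2 * (d / Real.sqrt 2) := mul_lt_mul_of_pos_left this hs2pos
        _ = d := by field_simp
  have hl₀'' : l₀ ∈ Set.Ioo a' b' := by
    constructor
    · apply max_lt hl₀.1
      rw [div_lt_iff₀ hs2pos]
      have := hl₀'.1
      nlinarith [hs2pos]
    · apply lt_min hl₀.2
      rw [lt_div_iff₀ hs2pos]
      have := hl₀'.2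
      nlinarith [hs2pos]
  -- the two trajectories
  set W : ℝ → ℝ × ℝ := fun t =>
    (u (Real.sqrt 2 * t) ^ 2, 2 * Real.sqrt 2 * (u (Real.sqrt 2 * t) * u' (Real.sqrt 2 * t)))
    with hWdef
  set Z : ℝ → ℝ × ℝ := fun t =>
    (2 * r t ^ 2 / (1 + r t ^ 4), 4 * r t * r' t * (1 - r t ^ 4) / (1 + r t ^ 4) ^ 2) with hZdef
  have hdenpos : ∀ t, (0:ℝ) < 1 + r t ^ 4 := fun t => by positivity
  have hW : ∀ t ∈ Set.Ioo a' b',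
      HasDerivAt W ((W t).2, 4 - 12 * (W t).1 ^ 2) t ∧ W t ∈ {p : ℝ × ℝ | |p.1| ≤ 1} := by
    intro t ht
    obtain ⟨hta, htc⟩ := hsub t ht
    have hUc := hucons _ htc
    have hinner : HasDerivAt (fun x : ℝ => Real.sqrt 2 * x) (Real.sqrt 2 * 1) t :=
      (hasDerivAt_id t).const_mul (Real.sqrt 2)
    have hU : HasDerivAt (fun x => u (Real.sqrt 2 * x))
        (u' (Real.sqrt 2 * t) * (Real.sqrt 2 * 1)) t :=
      HasDerivAt.comp t (hu _ htc) hinner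
    have hU' : HasDerivAt (fun x => u' (Real.sqrt 2 * x))
        (-2 * u (Real.sqrt 2 * t) ^ 3 * (Real.sqrt 2 * 1)) t :=
      HasDerivAt.comp t (hu2 _ htc) hinner
    constructor
    · apply HasDerivAt.prodMk
      · have h1 := hU.pow 2
        refine h1.congr_deriv (Eq.symm ?_)
        simp only [hWdef]
        push_cast
        ring
      · have h2 := (hU.mul hU').const_mul (2 * Real.sqrt 2)
        refine h2.congr_deriv (Eq.symm ?_)
        simp only [hWdef]
        have hs2' : Real.sqrt 2 * Real.sqrt 2 = 2 := Real.mul_self_sqrt (by norm_num)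
        linear_combination (4 * u (Real.sqrt 2 * t) ^ 4 - 2 * u' (Real.sqrt 2 * t) ^ 2) * hs2'
          - 4 * hUc
    · simp only [Set.mem_setOf_eq, hWdef]
      rw [abs_of_nonneg (by positivity)]
      nlinarith [sq_nonneg (u' (Real.sqrt 2 * t)), sq_nonneg (u (Real.sqrt 2 * t) ^ 2),
        sq_nonneg (u (Real.sqrt 2 * t) ^ 2 - 1), sq_nonneg (u (Real.sqrt 2 * t) ^ 2 + 1)]
  have hZ : ∀ t ∈ Set.Ioo a' b',
      HasDerivAt Z ((Z t).2, 4 - 12 * (Z t).1 ^ 2) t ∧ Z t ∈ {p : ℝ × ℝ | |p.1| ≤ 1} := by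
    intro t ht
    obtain ⟨hta, _⟩ := hsub t ht
    have hRc := hrcons _ hta
    have hden := hdenpos t
    have hR := hr t hta
    have hR' := hr2 t hta
    have hd1 : HasDerivAt (fun x => 1 + r x ^ 4) ((4:ℕ) * r t ^ 3 * r' t) t := by
      have := (hR.pow 4).const_add 1
      exact this
    constructor
    · apply HasDerivAt.prodMk
      · have hn1 : HasDerivAt (fun x => 2 * r x ^ 2) (2 * ((2:ℕ) * r t ^ 1 * r' t)) t :=
          (hR.pow 2).const_mul 2
        have h1 := hn1.div hd1 hden.ne'
        refine h1.congr_deriv (Eq.symm ?_)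
        simp only [hZdef]
        rw [div_eq_div_iff (by positivity) (by positivity)]
        push_cast
        ring
      · have hn2 : HasDerivAt (fun x => 4 * r x * r' x * (1 - r x ^ 4))
            ((4 * r' t * r' t + 4 * r t * (2 * r t ^ 3)) * (1 - r t ^ 4)
              + 4 * r t * r' t * (-((4:ℕ) * r t ^ 3 * r' t))) t := by
          have hprod : HasDerivAt (fun x => 4 * r x * r' x)
              (4 * r' t * r' t + 4 * r t * (2 * r t ^ 3)) t := by
            have := (hR.const_mul 4).mul hR'
            exact this
          have hfac : HasDerivAt (fun x => 1 - r x ^ 4) (-((4:ℕ) * r t ^ 3 * r' t)) t := by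
            have := (hR.pow 4).const_sub 1
            exact this
          exact hprod.mul hfac
        have hd2 : HasDerivAt (fun x => (1 + r x ^ 4) ^ 2)
            ((2:ℕ) * (1 + r t ^ 4) ^ 1 * ((4:ℕ) * r t ^ 3 * r' t)) t := hd1.pow 2
        have h2 := hn2.div hd2 (by positivity)
        refine h2.congr_deriv (Eq.symm ?_)
        simp only [hZdef]
        have hne : (1 + r t ^ 4 : ℝ) ≠ 0 := (hdenpos t).ne'
        have hz1 : 4 - 12 * (2 * r t ^ 2 / (1 + r t ^ 4)) ^ 2
            = (4 * (1 + r t ^ 4) ^ 2 - 48 * r t ^ 4) / (1 + r t ^ 4) ^ 2 := by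
          field_simp
          ring
        rw [hz1, div_eq_div_iff (by positivity) (by positivity)]
        push_cast
        linear_combination (-(1 + r t ^ 4) ^ 3 * (4 - 48 * r t ^ 4 + 12 * r t ^ 8)) * hRc
    · simp only [Set.mem_setOf_eq, hZdef]
      rw [abs_of_nonneg (by positivity), div_le_one hden]
      nlinarith [sq_nonneg (r t ^ 2 - 1)]
  have heq0 : W 0 = Z 0 := by
    simp only [hWdef, hZdef, mul_zero, hu0, hr0]
    norm_num
  have := ODE_solution_unique_of_mem_Ioo (v := fun _ p => (p.2, 4 - 12 * p.1 ^ 2))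
    (s := fun _ => {p : ℝ × ℝ | |p.1| ≤ 1}) (K := 24) (fun _ _ => aux_lip)
    (t₀ := 0) (f := W) (g := Z) ⟨ha', hb'⟩ hW hZ heq0
  have hfin := this hl₀''
  have h1 := congrArg Prod.fst hfin
  simpa [hWdef, hZdef] using h1
end

section
/- If u : ℝ → ℝ solves u'' = -2u³ with u(0)=1, u'(0)=0 (the function cleaf₂), and v : ℝ → ℝ solves v'' = 2v³ with v(0)=1, v'(0)=0 (the function cleafh₂), then u(l)·v(l) = 1 for all l in the intersection of their domains where both are defined and nonzero. -/
/-!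
The energy `v'² - v⁴` of a solution of `v'' = 2v³` is conserved, so `cleafh₂` satisfies
`v⁴ = 1 + v'² ≥ 1` and never vanishes. Using this energy identity, a direct computation shows
that `1 / v` solves `w'' = -2w³` with `w(0) = 1`, `w'(0) = 0`. The right-hand side is locally
Lipschitz, so uniqueness of solutions gives `cleaf₂ = 1 / cleafh₂` on the common interval.
-/

open Set

section Uniqueness

variable {E : Type*} [NormedAddCommGroup E] [NormedSpace ℝ E]

theorem ODE_solution_unique_of_mem_Ioo_of_locallyLipschitz {F : E → E} (hF : LocallyLipschitz F)
    {f g : ℝ → E} {a b t₀ : ℝ} (ht₀ : t₀ ∈ Ioo a b)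
    (hf : ∀ t ∈ Ioo a b, HasDerivAt f (F (f t)) t)
    (hg : ∀ t ∈ Ioo a b, HasDerivAt g (F (g t)) t) (heq : f t₀ = g t₀) :
    EqOn f g (Ioo a b) := by
  intro t ht
  obtain ⟨a', ha, ha'⟩ := exists_between (lt_min ht₀.1 ht.1)
  obtain ⟨b', hb', hb⟩ := exists_between (max_lt ht₀.2 ht.2)
  have hsub : Icc a' b' ⊆ Ioo a b := Icc_subset_Ioo ha hb
  -- Both trajectories stay in the compact set `K`, on which `F` is Lipschitz.
  set K := f '' Icc a' b' ∪ g '' Icc a' b'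
  have hfc : ContinuousOn f (Icc a' b') := HasDerivAt.continuousOn fun s hs ↦ hf s (hsub hs)
  have hgc : ContinuousOn g (Icc a' b') := HasDerivAt.continuousOn fun s hs ↦ hg s (hsub hs)
  have hK : IsCompact K :=
    (isCompact_Icc.image_of_continuousOn hfc).union (isCompact_Icc.image_of_continuousOn hgc)
  obtain ⟨L, hL⟩ := hF.locallyLipschitzOn.exists_lipschitzOnWith_of_compact hK
  have hIoo : Ioo a' b' ⊆ Icc a' b' := Ioo_subset_Icc_self
  exact ODE_solution_unique_of_mem_Ioo (v := fun _ ↦ F) (s := fun _ ↦ K) (fun _ _ ↦ hL)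
    ⟨ha'.trans_le (min_le_left _ _), (le_max_left _ _).trans_lt hb'⟩
    (fun s hs ↦ ⟨hf s (hsub (hIoo hs)), .inl (mem_image_of_mem f (hIoo hs))⟩)
    (fun s hs ↦ ⟨hg s (hsub (hIoo hs)), .inr (mem_image_of_mem g (hIoo hs))⟩) heq
    ⟨ha'.trans_le (min_le_right _ _), (le_max_right _ _).trans_lt hb'⟩

theorem second_order_ODE_solution_unique_of_mem_Ioo {φ : E → E} (hφ : ContDiff ℝ 1 φ)
    {x x' y y' : ℝ → E} {a b t₀ : ℝ} (ht₀ : t₀ ∈ Ioo a b)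
    (hx : ∀ t ∈ Ioo a b, HasDerivAt x (x' t) t)
    (hx' : ∀ t ∈ Ioo a b, HasDerivAt x' (φ (x t)) t)
    (hy : ∀ t ∈ Ioo a b, HasDerivAt y (y' t) t)
    (hy' : ∀ t ∈ Ioo a b, HasDerivAt y' (φ (y t)) t)
    (h₀ : x t₀ = y t₀) (h₁ : x' t₀ = y' t₀) :
    EqOn x y (Ioo a b) := fun t ht ↦ by
  have hF : ContDiff ℝ 1 fun p : E × E ↦ (p.2, φ p.1) :=
    contDiff_snd.prodMk (hφ.comp contDiff_fst)
  have := ODE_solution_unique_of_mem_Ioo_of_locallyLipschitz hF.locallyLipschitz ht₀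
    (f := fun t ↦ (x t, x' t)) (g := fun t ↦ (y t, y' t))
    (fun s hs ↦ (hx s hs).prodMk (hx' s hs)) (fun s hs ↦ (hy s hs).prodMk (hy' s hs))
    (Prod.ext h₀ h₁) ht
  exact congrArg Prod.fst this

end Uniqueness

theorem cleafh_energy_eq {v v' : ℝ → ℝ} {c d t₀ : ℝ} (ht₀ : t₀ ∈ Ioo c d)
    (hv : ∀ t ∈ Ioo c d, HasDerivAt v (v' t) t)
    (hv2 : ∀ t ∈ Ioo c d, HasDerivAt v' (2 * v t ^ 3) t) :
    ∀ t ∈ Ioo c d, v' t ^ 2 - v t ^ 4 = v' t₀ ^ 2 - v t₀ ^ 4 := by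
  have hE : ∀ t ∈ Ioo c d, HasDerivAt (fun s ↦ v' s ^ 2 - v s ^ 4) 0 t := fun t ht ↦
    (((hv2 t ht).pow 2).sub ((hv t ht).pow 4)).congr_deriv (by ring)
  exact fun t ht ↦ isOpen_Ioo.is_const_of_deriv_eq_zero isPreconnected_Ioo
    (fun s hs ↦ (hE s hs).differentiableAt.differentiableWithinAt) (fun s hs ↦ (hE s hs).deriv)
    ht ht₀

theorem ne_zero_of_sq_sub_pow_four_eq_neg_one {x y : ℝ} (h : y ^ 2 - x ^ 4 = -1) : x ≠ 0 := by
  rintro rfl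
  nlinarith [sq_nonneg y]

/-- Along a solution of `v'' = 2v³` with energy `-1`, `(1 / v)'' = -2 (1 / v)³`. -/
theorem hasDerivAt_neg_div_sq_of_energy {v v' : ℝ → ℝ} {l : ℝ} (hv : HasDerivAt v (v' l) l)
    (hv2 : HasDerivAt v' (2 * v l ^ 3) l) (henergy : v' l ^ 2 - v l ^ 4 = -1) :
    HasDerivAt (fun t ↦ -v' t / v t ^ 2) (-2 * (v l)⁻¹ ^ 3) l := by
  have hne := ne_zero_of_sq_sub_pow_four_eq_neg_one henergy
  refine (hv2.neg.div (hv.pow 2) (pow_ne_zero 2 hne)).congr_deriv ?_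
  simp only [Pi.neg_apply, Pi.pow_apply]
  field_simp
  linear_combination 2 * v l * henergy

theorem cleaf_cleafh_product (a b c d : ℝ) (ha : a < 0) (hb : 0 < b) (hc : c < 0) (hd : 0 < d)
    (u u' v v' : ℝ → ℝ)
    (hu : ∀ l ∈ Set.Ioo a b, HasDerivAt u (u' l) l)
    (hu2 : ∀ l ∈ Set.Ioo a b, HasDerivAt u' (-2 * u l ^ 3) l)
    (hu0 : u 0 = 1) (hu1 : u' 0 = 0)
    (hv : ∀ l ∈ Set.Ioo c d, HasDerivAt v (v' l) l)
    (hv2 : ∀ l ∈ Set.Ioo c d, HasDerivAt v' (2 * v l ^ 3) l)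
    (hv0 : v 0 = 1) (hv1 : v' 0 = 0) :
    ∀ l ∈ Set.Ioo a b ∩ Set.Ioo c d, u l ≠ 0 → v l ≠ 0 → u l * v l = 1 := by
  intro l hl _ _
  rw [Ioo_inter_Ioo] at hl
  have h0 : (0 : ℝ) ∈ Ioo (max a c) (min b d) := ⟨max_lt ha hc, lt_min hb hd⟩
  have hIu : Ioo (max a c) (min b d) ⊆ Ioo a b :=
    Ioo_subset_Ioo (le_max_left _ _) (min_le_left _ _)
  have hIv : Ioo (max a c) (min b d) ⊆ Ioo c d :=
    Ioo_subset_Ioo (le_max_right _ _) (min_le_right _ _)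
  have henergy : ∀ t ∈ Ioo c d, v' t ^ 2 - v t ^ 4 = -1 := fun t ht ↦ by
    rw [cleafh_energy_eq ⟨hc, hd⟩ hv hv2 t ht, hv0, hv1]
    norm_num
  have hvne : ∀ t ∈ Ioo c d, v t ≠ 0 := fun t ht ↦
    ne_zero_of_sq_sub_pow_four_eq_neg_one (henergy t ht)
  have hu_eq : EqOn u (fun t ↦ (v t)⁻¹) (Ioo (max a c) (min b d)) :=
    second_order_ODE_solution_unique_of_mem_Ioo (φ := fun x : ℝ ↦ -2 * x ^ 3) (by fun_prop) h0
      (fun t ht ↦ hu t (hIu ht)) (fun t ht ↦ hu2 t (hIu ht))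
      (fun t ht ↦ (hv t (hIv ht)).inv (hvne t (hIv ht)))
      (fun t ht ↦ hasDerivAt_neg_div_sq_of_energy (hv t (hIv ht)) (hv2 t (hIv ht))
        (henergy t (hIv ht)))
      (by simp [hu0, hv0]) (by simp [hu1, hv1])
  rw [hu_eq hl, inv_mul_cancel₀ (hvne l (hIv hl))]
end

section
/- Euler's addition formula for the lemniscatic integral: if u, v ∈ [0,1] with 1 + u²v² ≠ 0 and r := (u·sqrt(1-v⁴) + v·sqrt(1-u⁴))/(1 + u²v²) satisfies 0 ≤ r ≤ 1, then ∫_0^r dt/sqrt(1-t⁴) = ∫_0^u dt/sqrt(1-t⁴) + ∫_0^v dt/sqrt(1-t⁴). -/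
/-!
Put `arcsl x = ∫₀ˣ dt / √(1 - t⁴)` and `r = lemnAdd u v`. For fixed `v`, the map
`x ↦ arcsl (lemnAdd x v) - arcsl x` has zero derivative while `x² + v² + x²v² < 1`: there
`(1 + x²v²)² √(1 - r⁴)` equals the polynomial expression `lemnAddRoot x v` in `x`, `v`,
`√(1 - x⁴)`, `√(1 - v⁴)`, which is exactly the numerator of `∂ₓ r`. So Euler's formula holds on
the closed region `u² + v² + u²v² ≤ 1`. On its boundary `v = lemnCompl u` one has `r = 1`, whence
`arcsl u + arcsl (lemnCompl u) = arcsl 1`, and as `arcsl` is strictly increasing, the hypothesis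
`arcsl u + arcsl v ≤ arcsl 1` says precisely that `(u, v)` lies in the region.
-/

open Set MeasureTheory intervalIntegral

namespace Lemniscate

noncomputable def lemnIntegrand (t : ℝ) : ℝ := 1 / √(1 - t ^ 4)

noncomputable def arcsl (x : ℝ) : ℝ := ∫ t in (0:ℝ)..x, lemnIntegrand t

@[simp]
lemma arcsl_zero : arcsl 0 = 0 := integral_same

lemma lemnIntegrand_pos {x : ℝ} (hx : x ^ 4 < 1) : 0 < lemnIntegrand x :=
  one_div_pos.2 (Real.sqrt_pos.2 (sub_pos.2 hx))

lemma continuousAt_lemnIntegrand {x : ℝ} (hx : x ^ 4 < 1) : ContinuousAt lemnIntegrand x :=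
  continuousAt_const.div (by fun_prop) (Real.sqrt_pos.2 (sub_pos.2 hx)).ne'

lemma measurable_lemnIntegrand : Measurable lemnIntegrand := by
  unfold lemnIntegrand; fun_prop

-- On `(0, 1)`, `1 - t ≤ 1 - t ^ 4`: the singularity at `1` is no worse than `(1 - t) ^ (-1/2)`.
lemma intervalIntegrable_lemnIntegrand_zero_one : IntervalIntegrable lemnIntegrand volume 0 1 := by
  have hg : IntervalIntegrable (fun t : ℝ => (1 - t) ^ (-(1 / 2) : ℝ)) volume 0 1 := by
    simpa using ((intervalIntegrable_rpow' (a := 0) (b := 1) (r := -(1 / 2))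
      (by norm_num)).comp_sub_left 1).symm
  rw [intervalIntegrable_iff_integrableOn_Ioo_of_le zero_le_one] at hg ⊢
  refine hg.mono' measurable_lemnIntegrand.aestronglyMeasurable ?_
  refine ae_restrict_of_forall_mem measurableSet_Ioo fun t ⟨ht0, ht1⟩ => ?_
  have hle : 1 - t ≤ 1 - t ^ 4 := by
    nlinarith [pow_le_pow_of_le_one ht0.le ht1.le (show 1 ≤ 4 by norm_num)]
  rw [Real.norm_of_nonneg (lemnIntegrand_pos (pow_lt_one₀ ht0.le ht1 (by norm_num))).le,
    Real.rpow_neg (by linarith), ← Real.sqrt_eq_rpow, lemnIntegrand, one_div]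
  exact inv_anti₀ (Real.sqrt_pos.2 (by linarith)) (Real.sqrt_le_sqrt hle)

lemma intervalIntegrable_lemnIntegrand {a b : ℝ} (ha : a ∈ Icc (0:ℝ) 1) (hb : b ∈ Icc (0:ℝ) 1) :
    IntervalIntegrable lemnIntegrand volume a b :=
  intervalIntegrable_lemnIntegrand_zero_one.mono_set
    (uIcc_subset_uIcc (by simpa using ha) (by simpa using hb))

lemma hasDerivAt_arcsl {x : ℝ} (hx0 : 0 ≤ x) (hx1 : x < 1) :
    HasDerivAt arcsl (lemnIntegrand x) x :=
  integral_hasDerivAt_right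
    (intervalIntegrable_lemnIntegrand (left_mem_Icc.2 zero_le_one) ⟨hx0, hx1.le⟩)
    measurable_lemnIntegrand.aestronglyMeasurable.stronglyMeasurableAtFilter
    (continuousAt_lemnIntegrand (pow_lt_one₀ hx0 hx1 (by norm_num)))

lemma continuousOn_arcsl : ContinuousOn arcsl (Icc 0 1) := by
  have h :=
    continuousOn_primitive_interval' intervalIntegrable_lemnIntegrand_zero_one left_mem_uIcc
  rwa [uIcc_of_le zero_le_one] at h

lemma strictMonoOn_arcsl : StrictMonoOn arcsl (Icc 0 1) := by
  refine strictMonoOn_of_deriv_pos (convex_Icc 0 1) continuousOn_arcsl fun x hx => ?_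
  rw [interior_Icc] at hx
  rw [(hasDerivAt_arcsl hx.1.le hx.2).deriv]
  exact lemnIntegrand_pos (pow_lt_one₀ hx.1.le hx.2 (by norm_num))

noncomputable def lemnAdd (u v : ℝ) : ℝ :=
  (u * √(1 - v ^ 4) + v * √(1 - u ^ 4)) / (1 + u ^ 2 * v ^ 2)

noncomputable def lemnAddRoot (u v : ℝ) : ℝ :=
  √(1 - u ^ 4) * √(1 - v ^ 4) * (1 - u ^ 2 * v ^ 2) - 2 * u * v * (u ^ 2 + v ^ 2)

lemma one_sub_lemnAdd_pow_four {u v : ℝ} (hu : u ^ 4 ≤ 1) (hv : v ^ 4 ≤ 1) :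
    1 - lemnAdd u v ^ 4 = (lemnAddRoot u v / (1 + u ^ 2 * v ^ 2) ^ 2) ^ 2 := by
  have hA := Real.sq_sqrt (sub_nonneg.2 hu)
  have hB := Real.sq_sqrt (sub_nonneg.2 hv)
  have hD : 1 + u ^ 2 * v ^ 2 ≠ 0 := by positivity
  unfold lemnAdd lemnAddRoot
  field_simp
  set A := √(1 - u ^ 4)
  set B := √(1 - v ^ 4)
  linear_combination (-B^2 - v^4 - v^4*A^2 - 4*u*v^3*A*B - 4*u^2*v^2*B^2 + u^4*v^4
      - u^4*v^4*B^2) * hA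
    + (-1 - 4*u^2*v^2 - 4*u^3*v*A*B - u^4*B^2 + 4*u^6*v^2 + u^8*v^4) * hB

lemma lemnAdd_mem_Icc {u v : ℝ} (hu : u ∈ Icc (0:ℝ) 1) (hv : v ∈ Icc (0:ℝ) 1) :
    lemnAdd u v ∈ Icc (0:ℝ) 1 := by
  have h0 : 0 ≤ lemnAdd u v := by
    have := hu.1; have := hv.1
    unfold lemnAdd; positivity
  refine ⟨h0, (pow_le_one_iff_of_nonneg h0 (by norm_num : 4 ≠ 0)).1 ?_⟩
  have := one_sub_lemnAdd_pow_four (pow_le_one₀ hu.1 hu.2) (pow_le_one₀ hv.1 hv.2)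
  nlinarith [sq_nonneg (lemnAddRoot u v / (1 + u ^ 2 * v ^ 2) ^ 2)]

lemma four_mul_mul_add_sq_lt {a b : ℝ} (ha : 0 ≤ a) (hb : 0 ≤ b) (h : a + b + a * b < 1) :
    4 * a * b * (a + b) ^ 2 < (1 - a ^ 2) * (1 - b ^ 2) * (1 - a * b) ^ 2 := by
  have ha1 : a < 1 := by nlinarith
  have hb1 : b < 1 := by nlinarith
  have hH : 0 < (1 + a) * (1 + b) + 2 * a * b * (a + b) - a ^ 2 * b ^ 2 * (1 - a) * (1 - b) := by
    have hab : a * b < 1 := by nlinarith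
    have h1 : (1 - a) * (1 - b) ≤ 1 := by nlinarith
    have h2 : a ^ 2 * b ^ 2 * ((1 - a) * (1 - b)) ≤ a ^ 2 * b ^ 2 :=
      mul_le_of_le_one_right (by positivity) h1
    nlinarith [mul_nonneg ha hb, mul_nonneg (mul_nonneg ha hb) (add_nonneg ha hb)]
  nlinarith [mul_pos (by linarith : (0:ℝ) < 1 - a - b - a * b) hH]

lemma lemnAddRoot_pos {u v : ℝ} (h : u ^ 2 + v ^ 2 + u ^ 2 * v ^ 2 < 1) :
    0 < lemnAddRoot u v := by
  have hu4 : u ^ 4 ≤ 1 := by nlinarith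
  have hv4 : v ^ 4 ≤ 1 := by nlinarith
  have huv : 0 ≤ 1 - u ^ 2 * v ^ 2 := by nlinarith
  refine sub_pos.2 (lt_of_pow_lt_pow_left₀ 2 (by positivity) ?_)
  have hA := Real.sq_sqrt (sub_nonneg.2 hu4)
  have hB := Real.sq_sqrt (sub_nonneg.2 hv4)
  linear_combination four_mul_mul_add_sq_lt (sq_nonneg u) (sq_nonneg v) h
    - (1 - u ^ 2 * v ^ 2) ^ 2 * √(1 - v ^ 4) ^ 2 * hA
    - (1 - u ^ 2 * v ^ 2) ^ 2 * (1 - u ^ 4) * hB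

lemma hasDerivAt_lemnAdd_left {s v : ℝ} (hs : s ^ 4 < 1) :
    HasDerivAt (fun x => lemnAdd x v)
      (lemnAddRoot s v / (√(1 - s ^ 4) * (1 + s ^ 2 * v ^ 2) ^ 2)) s := by
  have hA : 0 < √(1 - s ^ 4) := Real.sqrt_pos.2 (sub_pos.2 hs)
  have hD : 0 < 1 + s ^ 2 * v ^ 2 := by positivity
  have hsqrt : HasDerivAt (fun x : ℝ => √(1 - x ^ 4)) (-(4 * s ^ 3) / (2 * √(1 - s ^ 4))) s := by
    simpa using ((hasDerivAt_pow 4 s).const_sub 1).sqrt (sub_pos.2 hs).ne'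
  have hnum : HasDerivAt (fun x => x * √(1 - v ^ 4) + v * √(1 - x ^ 4))
      (1 * √(1 - v ^ 4) + v * (-(4 * s ^ 3) / (2 * √(1 - s ^ 4)))) s :=
    ((hasDerivAt_id' s).mul_const _).add (hsqrt.const_mul v)
  have hden : HasDerivAt (fun x => 1 + x ^ 2 * v ^ 2) (2 * s * v ^ 2) s := by
    simpa using ((hasDerivAt_pow 2 s).mul_const (v ^ 2)).const_add 1
  refine (hnum.div hden hD.ne').congr_deriv ?_
  have hA2 := Real.sq_sqrt (sub_pos.2 hs).le
  unfold lemnAddRoot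
  field_simp
  linear_combination (-4 * s * v ^ 3) * hA2

lemma hasDerivAt_arcsl_lemnAdd {s v : ℝ} (hs : 0 ≤ s) (hv : 0 ≤ v)
    (h : s ^ 2 + v ^ 2 + s ^ 2 * v ^ 2 < 1) :
    HasDerivAt (fun x => arcsl (lemnAdd x v)) (lemnIntegrand s) s := by
  have hs1 : s ^ 4 < 1 := by nlinarith
  have hv1 : v ^ 4 < 1 := by nlinarith
  have hsI : s ∈ Icc (0:ℝ) 1 := ⟨hs, (pow_le_one_iff_of_nonneg hs (by norm_num)).1 hs1.le⟩
  have hvI : v ∈ Icc (0:ℝ) 1 := ⟨hv, (pow_le_one_iff_of_nonneg hv (by norm_num)).1 hv1.le⟩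
  have hP := lemnAddRoot_pos h
  have hD : 0 < 1 + s ^ 2 * v ^ 2 := by positivity
  have hroot : √(1 - lemnAdd s v ^ 4) = lemnAddRoot s v / (1 + s ^ 2 * v ^ 2) ^ 2 := by
    rw [one_sub_lemnAdd_pow_four hs1.le hv1.le, Real.sqrt_sq (by positivity)]
  have hr1 : lemnAdd s v < 1 := by
    have : 0 < 1 - lemnAdd s v ^ 4 := by
      rw [one_sub_lemnAdd_pow_four hs1.le hv1.le]; positivity
    exact (pow_lt_one_iff_of_nonneg (lemnAdd_mem_Icc hsI hvI).1 (by norm_num : 4 ≠ 0)).1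
      (by linarith)
  refine ((hasDerivAt_arcsl (lemnAdd_mem_Icc hsI hvI).1 hr1).comp s
    (hasDerivAt_lemnAdd_left hs1)).congr_deriv ?_
  have hA : 0 < √(1 - s ^ 4) := Real.sqrt_pos.2 (sub_pos.2 hs1)
  rw [lemnIntegrand, lemnIntegrand, hroot]
  field_simp

@[simp]
lemma lemnAdd_zero_left (v : ℝ) : lemnAdd 0 v = v := by
  simp [lemnAdd]

lemma continuous_lemnAdd_left (v : ℝ) : Continuous fun x => lemnAdd x v :=
  Continuous.div (by fun_prop) (by fun_prop) fun x => by positivity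

theorem arcsl_lemnAdd {u v : ℝ} (hu : u ∈ Icc (0:ℝ) 1) (hv : v ∈ Icc (0:ℝ) 1)
    (h : u ^ 2 + v ^ 2 + u ^ 2 * v ^ 2 ≤ 1) :
    arcsl (lemnAdd u v) = arcsl u + arcsl v := by
  have hsub : Icc 0 u ⊆ Icc (0:ℝ) 1 := Icc_subset_Icc_right hu.2
  have hcont : ContinuousOn (fun x => arcsl (lemnAdd x v) - arcsl x) (Icc 0 u) :=
    (continuousOn_arcsl.comp (continuous_lemnAdd_left v).continuousOn
      fun x hx => lemnAdd_mem_Icc (hsub hx) hv).sub (continuousOn_arcsl.mono hsub)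
  have hderiv : ∀ x ∈ Ico 0 u,
      HasDerivWithinAt (fun x => arcsl (lemnAdd x v) - arcsl x) 0 (Ici x) x := by
    rintro x ⟨hx0, hxu⟩
    have hlt : x ^ 2 + v ^ 2 + x ^ 2 * v ^ 2 < 1 := by nlinarith
    have hx1 : x < 1 := by nlinarith
    have hd := (hasDerivAt_arcsl_lemnAdd hx0 hv.1 hlt).sub (hasDerivAt_arcsl hx0 hx1)
    rw [sub_self] at hd
    exact hd.hasDerivWithinAt
  have hconst := constant_of_has_deriv_right_zero hcont hderiv u (right_mem_Icc.2 hu.1)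
  rw [lemnAdd_zero_left, arcsl_zero, sub_zero] at hconst
  linarith

noncomputable def lemnCompl (x : ℝ) : ℝ := √((1 - x ^ 2) / (1 + x ^ 2))

lemma lemnCompl_mem_Icc (x : ℝ) : lemnCompl x ∈ Icc (0:ℝ) 1 :=
  ⟨Real.sqrt_nonneg _, Real.sqrt_le_one.2 <| (div_le_one (by positivity)).2 (by nlinarith)⟩

lemma le_lemnCompl_iff {x v : ℝ} (hx : x ∈ Icc (0:ℝ) 1) (hv : 0 ≤ v) :
    v ≤ lemnCompl x ↔ x ^ 2 + v ^ 2 + x ^ 2 * v ^ 2 ≤ 1 := by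
  have hq : 0 ≤ (1 - x ^ 2) / (1 + x ^ 2) :=
    div_nonneg (by nlinarith [hx.1, hx.2]) (by positivity)
  rw [lemnCompl, Real.le_sqrt hv hq, le_div_iff₀ (by positivity)]
  constructor <;> intro h <;> linarith

lemma lemnAdd_lemnCompl {x : ℝ} (hx : x ∈ Icc (0:ℝ) 1) : lemnAdd x (lemnCompl x) = 1 := by
  have hq : 0 ≤ (1 - x ^ 2) / (1 + x ^ 2) :=
    div_nonneg (by nlinarith [hx.1, hx.2]) (by positivity)
  have hc2 : lemnCompl x ^ 2 = (1 - x ^ 2) / (1 + x ^ 2) := Real.sq_sqrt hq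
  have hB : √(1 - lemnCompl x ^ 4) = 2 * x / (1 + x ^ 2) := by
    rw [show 1 - lemnCompl x ^ 4 = (2 * x / (1 + x ^ 2)) ^ 2 by
      rw [show lemnCompl x ^ 4 = (lemnCompl x ^ 2) ^ 2 by ring, hc2]; field_simp; ring]
    exact Real.sqrt_sq (by have := hx.1; positivity)
  have hA : lemnCompl x * √(1 - x ^ 4) = 1 - x ^ 2 := by
    rw [lemnCompl, ← Real.sqrt_mul hq,
      show (1 - x ^ 2) / (1 + x ^ 2) * (1 - x ^ 4) = (1 - x ^ 2) ^ 2 by field_simp; ring]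
    exact Real.sqrt_sq (by nlinarith [hx.1, hx.2])
  have hden : 1 + x ^ 2 * ((1 - x ^ 2) / (1 + x ^ 2)) ≠ 0 := by
    nlinarith [mul_nonneg (sq_nonneg x) hq]
  rw [lemnAdd, hB, hA, hc2, div_eq_one_iff_eq hden]
  field_simp
  ring

lemma arcsl_add_arcsl_lemnCompl {x : ℝ} (hx : x ∈ Icc (0:ℝ) 1) :
    arcsl x + arcsl (lemnCompl x) = arcsl 1 := by
  rw [← arcsl_lemnAdd hx (lemnCompl_mem_Icc x)
    ((le_lemnCompl_iff hx (lemnCompl_mem_Icc x).1).1 le_rfl), lemnAdd_lemnCompl hx]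

end Lemniscate

open Lemniscate in
theorem euler_lemniscate_addition_general (u v r : ℝ)
    (hu : u ∈ Set.Icc (0:ℝ) 1) (hv : v ∈ Set.Icc (0:ℝ) 1)
    (hr : r = (u * Real.sqrt (1 - v ^ 4) + v * Real.sqrt (1 - u ^ 4)) /
      (1 + u ^ 2 * v ^ 2))
    (hF : (∫ t in (0:ℝ)..u, 1 / Real.sqrt (1 - t ^ 4)) +
          (∫ t in (0:ℝ)..v, 1 / Real.sqrt (1 - t ^ 4)) ≤
          ∫ t in (0:ℝ)..1, 1 / Real.sqrt (1 - t ^ 4)) :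
    (∫ t in (0:ℝ)..r, 1 / Real.sqrt (1 - t ^ 4)) =
      (∫ t in (0:ℝ)..u, 1 / Real.sqrt (1 - t ^ 4)) +
      (∫ t in (0:ℝ)..v, 1 / Real.sqrt (1 - t ^ 4)) := by
  change arcsl r = arcsl u + arcsl v
  change arcsl u + arcsl v ≤ arcsl 1 at hF
  have hvc : v ≤ lemnCompl u := by
    rw [← strictMonoOn_arcsl.le_iff_le hv (lemnCompl_mem_Icc u)]
    linarith [arcsl_add_arcsl_lemnCompl hu]
  rw [hr]
  exact arcsl_lemnAdd hu hv ((le_lemnCompl_iff hu hv.1).1 hvc)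

theorem euler_lemniscate_addition (u v r : ℝ)
    (hu : u ∈ Set.Icc (0:ℝ) 1) (hv : v ∈ Set.Icc (0:ℝ) 1)
    (hden : 1 + u ^ 2 * v ^ 2 ≠ 0)
    (hr : r = (u * Real.sqrt (1 - v ^ 4) + v * Real.sqrt (1 - u ^ 4)) /
      (1 + u ^ 2 * v ^ 2))
    (hr0 : 0 ≤ r) (hr1 : r ≤ 1)
    (hF : (∫ t in (0:ℝ)..u, 1 / Real.sqrt (1 - t ^ 4)) +
          (∫ t in (0:ℝ)..v, 1 / Real.sqrt (1 - t ^ 4)) ≤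
          ∫ t in (0:ℝ)..1, 1 / Real.sqrt (1 - t ^ 4)) :
    (∫ t in (0:ℝ)..r, 1 / Real.sqrt (1 - t ^ 4)) =
      (∫ t in (0:ℝ)..u, 1 / Real.sqrt (1 - t ^ 4)) +
      (∫ t in (0:ℝ)..v, 1 / Real.sqrt (1 - t ^ 4)) :=
  euler_lemniscate_addition_general u v r hu hv hr hF
end
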